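/- arXiv:1908.10531 — 4 statements merged into one kernel-verified Lean document; each statement's English description precedes it below -/
import Mathlib

section
/- If the matrix I_m − hγ T is invertible and λ = (I_m − hγ T)^{−1}(h ψ + h T σ) with ψ = Wᵀ F, then the vector k = V λ + h(F − V ψ) satisfies the full-space stage equation k = (I_N − hγ A)^{−1}(h F + h A V σ), where A = V T Wᵀ and Wᵀ V = I_m, provided I_N − hγ A is invertible. -/
open Matrix

/-- Reduced-space implementation of a BOROK stage: the vector
`k = V λ + h (F − V ψ)` built from the reduced solve
`λ = (I − hγT)⁻¹ (h ψ + h T σ)`, `ψ = Wᵀ F`, solves the full-space stage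
equation `k = (I − hγA)⁻¹ (h F + h A V σ)`. -/
theorem borok_reduced_space_stage
    {N m : ℕ} (J : Matrix (Fin N) (Fin N) ℝ)
    (V W : Matrix (Fin N) (Fin m) ℝ) (hWV : Wᵀ * V = 1)
    (T : Matrix (Fin m) (Fin m) ℝ) (hT : T = Wᵀ * J * V)
    (A : Matrix (Fin N) (Fin N) ℝ) (hA : A = V * T * Wᵀ)
    (h γ : ℝ) (F : Fin N → ℝ) (σ : Fin m → ℝ)
    (hTinv : IsUnit ((1 : Matrix (Fin m) (Fin m) ℝ) - (h * γ) • T))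
    (hAinv : IsUnit ((1 : Matrix (Fin N) (Fin N) ℝ) - (h * γ) • A))
    (ψ : Fin m → ℝ) (hψ : ψ = Wᵀ *ᵥ F)
    (lam : Fin m → ℝ)
    (hlam : lam = ((1 : Matrix (Fin m) (Fin m) ℝ) - (h * γ) • T)⁻¹ *ᵥ
      (h • ψ + h • (T *ᵥ σ)))
    (k : Fin N → ℝ) (hk : k = V *ᵥ lam + h • (F - V *ᵥ ψ)) :
    k = ((1 : Matrix (Fin N) (Fin N) ℝ) - (h * γ) • A)⁻¹ *ᵥ
      (h • F + h • (A *ᵥ (V *ᵥ σ))) := by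
  have hTd : IsUnit ((1 : Matrix (Fin m) (Fin m) ℝ) - (h * γ) • T).det :=
    (Matrix.isUnit_iff_isUnit_det _).1 hTinv
  have hAd : IsUnit ((1 : Matrix (Fin N) (Fin N) ℝ) - (h * γ) • A).det :=
    (Matrix.isUnit_iff_isUnit_det _).1 hAinv
  -- the reduced stage equation
  have hVlam : ((1 : Matrix (Fin m) (Fin m) ℝ) - (h * γ) • T) *ᵥ lam
      = h • ψ + h • (T *ᵥ σ) := by
    rw [hlam, Matrix.mulVec_mulVec, Matrix.mul_nonsing_inv _ hTd, Matrix.one_mulVec]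
  have hVlam' : lam - (h * γ) • (T *ᵥ lam) = h • ψ + h • (T *ᵥ σ) := by
    rw [← hVlam, Matrix.sub_mulVec, Matrix.one_mulVec, Matrix.smul_mulVec]
  -- Wᵀ annihilates things via hWV
  have hWVv : ∀ v : Fin m → ℝ, Wᵀ *ᵥ (V *ᵥ v) = v := fun v => by
    rw [Matrix.mulVec_mulVec, hWV, Matrix.one_mulVec]
  have hWk : Wᵀ *ᵥ k = lam := by
    rw [hk, Matrix.mulVec_add, Matrix.mulVec_smul, Matrix.mulVec_sub, hWVv, hWVv, ← hψ]
    simp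
  have hAk : A *ᵥ k = V *ᵥ (T *ᵥ lam) := by
    rw [hA, ← Matrix.mulVec_mulVec, ← Matrix.mulVec_mulVec, hWk]
  have hAVσ : A *ᵥ (V *ᵥ σ) = V *ᵥ (T *ᵥ σ) := by
    rw [hA, ← Matrix.mulVec_mulVec, ← Matrix.mulVec_mulVec, hWVv]
  -- full-space stage equation
  have key : ((1 : Matrix (Fin N) (Fin N) ℝ) - (h * γ) • A) *ᵥ k
      = h • F + h • (A *ᵥ (V *ᵥ σ)) := by
    rw [Matrix.sub_mulVec, Matrix.one_mulVec, Matrix.smul_mulVec, hAk, hAVσ]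
    have := congrArg (fun v => V *ᵥ v) hVlam'
    simp only [Matrix.mulVec_sub, Matrix.mulVec_add, Matrix.mulVec_smul] at this
    rw [hk]
    rw [sub_eq_iff_eq_add] at this
    rw [this]
    module
  calc k = ((1 : Matrix (Fin N) (Fin N) ℝ) - (h * γ) • A)⁻¹ *ᵥ
      (((1 : Matrix (Fin N) (Fin N) ℝ) - (h * γ) • A) *ᵥ k) := by
        rw [Matrix.mulVec_mulVec, Matrix.nonsing_inv_mul _ hAd, Matrix.one_mulVec]
    _ = _ := by rw [key]
end

section
/- For an analytic function φ with φ(z) = Σ c_i z^i/i! and c_0 = φ(0), the difference φ(hγ A) − V φ(hγ T) Wᵀ equals φ(0)(I_N − V Wᵀ), where A = V T Wᵀ and Wᵀ V = I_m. In particular, for φ(z) = 1/(1−z) and I_N − hγA, I_m − hγT invertible: (I_N − hγ A)^{−1} = (I_N − V Wᵀ) + V (I_m − hγ T)^{−1} Wᵀ. -/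
open Matrix

/-- Resolvent identity for the approximate Jacobian (the case `φ(z) = 1/(1−z)`):
`(I − hγA)⁻¹ = (I − V Wᵀ) + V (I − hγT)⁻¹ Wᵀ`. -/
theorem borok_resolvent_identity
    {N m : ℕ} (V W : Matrix (Fin N) (Fin m) ℝ) (hWV : Wᵀ * V = 1)
    (T : Matrix (Fin m) (Fin m) ℝ)
    (A : Matrix (Fin N) (Fin N) ℝ) (hA : A = V * T * Wᵀ)
    (h γ : ℝ)
    (hTinv : IsUnit ((1 : Matrix (Fin m) (Fin m) ℝ) - (h * γ) • T))
    (hAinv : IsUnit ((1 : Matrix (Fin N) (Fin N) ℝ) - (h * γ) • A)) :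
    ((1 : Matrix (Fin N) (Fin N) ℝ) - (h * γ) • A)⁻¹
      = ((1 : Matrix (Fin N) (Fin N) ℝ) - V * Wᵀ)
        + V * ((1 : Matrix (Fin m) (Fin m) ℝ) - (h * γ) • T)⁻¹ * Wᵀ := by
  set S : Matrix (Fin m) (Fin m) ℝ := 1 - (h * γ) • T with hS
  have hSinv : S * S⁻¹ = 1 :=
    Matrix.mul_nonsing_inv _ ((Matrix.isUnit_iff_isUnit_det _).mp hTinv)
  apply Matrix.inv_eq_right_inv
  have key : V * (S * S⁻¹) * Wᵀ = V * Wᵀ := by rw [hSinv, Matrix.mul_one]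
  calc (1 - (h * γ) • A) * ((1 - V * Wᵀ) + V * S⁻¹ * Wᵀ)
      = (1 - V * Wᵀ) + V * (S * S⁻¹) * Wᵀ := by
        subst hA; rw [hS]
        simp only [Matrix.sub_mul, Matrix.mul_sub, Matrix.add_mul, Matrix.mul_add,
          Matrix.one_mul, Matrix.mul_one, Matrix.smul_mul, Matrix.mul_smul]
        have h1 : V * T * Wᵀ * (V * Wᵀ) = V * T * Wᵀ := by
          rw [Matrix.mul_assoc (V * T) Wᵀ, ← Matrix.mul_assoc Wᵀ, hWV, Matrix.one_mul]
        have h2 : V * T * Wᵀ * (V * ((1 - (h*γ) • T)⁻¹) * Wᵀ)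
            = V * (T * (1 - (h*γ) • T)⁻¹) * Wᵀ := by
          rw [Matrix.mul_assoc (V*T) Wᵀ, ← Matrix.mul_assoc Wᵀ, ← Matrix.mul_assoc Wᵀ,
            hWV, Matrix.one_mul, ← Matrix.mul_assoc, ← Matrix.mul_assoc, Matrix.mul_assoc V T]
        rw [h1, h2]
        noncomm_ring
    _ = 1 := by rw [key]; abel
end

section
/- General stage residual formula: under the Lanczos relation J V = V T + θ v e_mᵀ with Wᵀ V = I_m and T = Wᵀ J V, if for each j ≤ i vectors F_j ∈ ℝ^N, ψ_j = Wᵀ F_j, λ_j ∈ ℝ^m satisfy (I_m − hγ T) λ_i = h ψ_i + h T Σ_{j<i} γ_{ij} λ_j and k_j = V λ_j + h(F_j − V ψ_j), then the residual r_i = (I_N − hγ J) k_i − h F_i − h J Σ_{j<i} γ_{ij} k_j (with γ_{ii} := γ) equals r_i = − h² J Σ_{j=1}^{i} γ_{ij} (F_j − V ψ_j) − h θ (e_mᵀ Σ_{j=1}^{i} γ_{ij} λ_j) v. -/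
open Matrix

/-- Stage linear system residuals for BOROK methods: at the `i`-th stage,
`r_i = − h² J Σ_{j≤i} γ_{ij}(F_j − V ψ_j) − h θ (e_mᵀ Σ_{j≤i} γ_{ij} λ_j) v`,
with the convention `γ_{ii} = γ`.  Previous stages are indexed by `Fin i`
(embedded via `castSucc`) and the current stage is `Fin.last i`. -/
theorem borok_stage_residual
    {N M i : ℕ} (J : Matrix (Fin N) (Fin N) ℝ)
    (V W : Matrix (Fin N) (Fin (M + 1)) ℝ) (hWV : Wᵀ * V = 1)
    (T : Matrix (Fin (M + 1)) (Fin (M + 1)) ℝ) (hT : T = Wᵀ * J * V)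
    (θ : ℝ) (v : Fin N → ℝ)
    (hLanczos : J * V = V * T + θ • vecMulVec v (Pi.single (Fin.last M) 1))
    (h γ : ℝ) (g : Fin i → ℝ) -- coefficients γ_{ij} for j < i
    (F : Fin (i + 1) → Fin N → ℝ)
    (ψ : Fin (i + 1) → Fin (M + 1) → ℝ) (hψ : ∀ j, ψ j = Wᵀ *ᵥ F j)
    (lam : Fin (i + 1) → Fin (M + 1) → ℝ)
    (hlam : ((1 : Matrix (Fin (M + 1)) (Fin (M + 1)) ℝ) - (h * γ) • T) *ᵥ
        lam (Fin.last i)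
      = h • ψ (Fin.last i) + h • (T *ᵥ ∑ j : Fin i, g j • lam j.castSucc))
    (k : Fin (i + 1) → Fin N → ℝ)
    (hk : ∀ j, k j = V *ᵥ lam j + h • (F j - V *ᵥ ψ j))
    (r : Fin N → ℝ)
    (hr : r = ((1 : Matrix (Fin N) (Fin N) ℝ) - (h * γ) • J) *ᵥ k (Fin.last i)
      - h • F (Fin.last i)
      - h • (J *ᵥ ∑ j : Fin i, g j • k j.castSucc)) :
    r = -(h ^ 2) • (J *ᵥ (γ • (F (Fin.last i) - V *ᵥ ψ (Fin.last i))
          + ∑ j : Fin i, g j • (F j.castSucc - V *ᵥ ψ j.castSucc)))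
      - (h * θ * ((γ • lam (Fin.last i)
          + ∑ j : Fin i, g j • lam j.castSucc) (Fin.last M))) • v := by
  -- Key consequence of the Lanczos relation
  have key : ∀ x : Fin (M + 1) → ℝ,
      J *ᵥ (V *ᵥ x) = V *ᵥ (T *ᵥ x) + (θ * x (Fin.last M)) • v := by
    intro x
    have h1 : (J * V) *ᵥ x
        = (V * T) *ᵥ x + (θ • vecMulVec v (Pi.single (Fin.last M) 1)) *ᵥ x := by
      rw [hLanczos, Matrix.add_mulVec]
    have h2 : (θ • vecMulVec v (Pi.single (Fin.last M) 1)) *ᵥ x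
        = (θ * x (Fin.last M)) • v := by
      funext n
      simp [Matrix.mulVec, dotProduct, Matrix.vecMulVec_apply, Pi.single_apply,
        mul_ite, ite_mul]
      ring
    rw [← Matrix.mulVec_mulVec, ← Matrix.mulVec_mulVec] at h1
    rw [h1, h2]
  set S : Fin (M + 1) → ℝ := ∑ j : Fin i, g j • lam j.castSucc with hS
  set SF : Fin N → ℝ := ∑ j : Fin i, g j • (F j.castSucc - V *ᵥ ψ j.castSucc)
    with hSF
  -- reduced stage equation, mapped through V
  have hVlam : V *ᵥ lam (Fin.last i)
      = (h * γ) • (V *ᵥ (T *ᵥ lam (Fin.last i))) + h • (V *ᵥ ψ (Fin.last i))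
        + h • (V *ᵥ (T *ᵥ S)) := by
    have h3 := congrArg (fun x => V *ᵥ x) hlam
    simp only [Matrix.sub_mulVec, Matrix.one_mulVec, Matrix.smul_mulVec,
      Matrix.mulVec_sub, Matrix.mulVec_add, Matrix.mulVec_smul] at h3
    have := sub_eq_iff_eq_add.mp h3
    rw [this]; module
  -- the sum of previous stage vectors
  have hsumk : ∑ j : Fin i, g j • k j.castSucc = V *ᵥ S + h • SF := by
    have hVS : V *ᵥ S = ∑ j : Fin i, g j • (V *ᵥ lam j.castSucc) := by
      rw [hS, show V *ᵥ (∑ j : Fin i, g j • lam j.castSucc)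
          = V.mulVecLin (∑ j : Fin i, g j • lam j.castSucc) from rfl,
        map_sum]
      simp [Matrix.mulVec_smul]
    rw [hVS, hSF, Finset.smul_sum, ← Finset.sum_add_distrib]
    refine Finset.sum_congr rfl fun j _ => ?_
    rw [hk]
    module
  rw [hr, hsumk, hk (Fin.last i)]
  simp only [Matrix.sub_mulVec, Matrix.one_mulVec, Matrix.smul_mulVec,
    Matrix.mulVec_add, Matrix.mulVec_smul, key, Pi.add_apply, Pi.smul_apply,
    smul_eq_mul]
  rw [hVlam]
  module
end

section
/- Stage residual with subspace extension: suppose Wᵀ V = I_m (for extended bases V, W ∈ ℝ^{N×M}), P = V Wᵀ satisfies P F_j = F_j for all j ≤ i (the right-hand sides F_j are contained in the subspace), and J V = V T + E for some remainder E ∈ ℝ^{N×M} with Wᵀ E = 0, where T = Wᵀ J V. If the reduced stage vectors λ_j satisfy (I_M − hγ T) λ_i = h ψ_i + h T Σ_{j<i} γ_{ij} λ_j with ψ_j = Wᵀ F_j, and k_j = V λ_j, then the residual r_i = (I_N − hγ J) k_i − h F_i − h J Σ_{j<i} γ_{ij} k_j equals r_i = − h E Σ_{j=1}^{i} γ_{ij}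 λ_j (with γ_{ii} := γ). In particular the O(h²) full-space Jacobian term in the general residual vanishes. -/
open Matrix

/-- Stage residual with subspace extension: when the right-hand sides `F_j`
are contained in the extended subspace (`V Wᵀ F_j = F_j`) and
`J V = V T + E` with `Wᵀ E = 0`, the stage residual reduces to
`r_i = − h E Σ_{j≤i} γ_{ij} λ_j` (convention `γ_{ii} = γ`); in particular the
`O(h²)` full-space Jacobian term vanishes. -/
theorem borok_stage_residual_with_extension
    {N M i : ℕ} (J : Matrix (Fin N) (Fin N) ℝ)
    (V W : Matrix (Fin N) (Fin M) ℝ) (hWV : Wᵀ * V = 1)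
    (T : Matrix (Fin M) (Fin M) ℝ) (hT : T = Wᵀ * J * V)
    (E : Matrix (Fin N) (Fin M) ℝ)
    (hE : J * V = V * T + E) (hWE : Wᵀ * E = 0)
    (h γ : ℝ) (g : Fin i → ℝ) -- coefficients γ_{ij} for j < i
    (F : Fin (i + 1) → Fin N → ℝ)
    (hF : ∀ j, V *ᵥ (Wᵀ *ᵥ F j) = F j)
    (ψ : Fin (i + 1) → Fin M → ℝ) (hψ : ∀ j, ψ j = Wᵀ *ᵥ F j)
    (lam : Fin (i + 1) → Fin M → ℝ)
    (hlam : ((1 : Matrix (Fin M) (Fin M) ℝ) - (h * γ) • T) *ᵥ lam (Fin.last i)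
      = h • ψ (Fin.last i) + h • (T *ᵥ ∑ j : Fin i, g j • lam j.castSucc))
    (k : Fin (i + 1) → Fin N → ℝ)
    (hk : ∀ j, k j = V *ᵥ lam j)
    (r : Fin N → ℝ)
    (hr : r = ((1 : Matrix (Fin N) (Fin N) ℝ) - (h * γ) • J) *ᵥ k (Fin.last i)
      - h • F (Fin.last i)
      - h • (J *ᵥ ∑ j : Fin i, g j • k j.castSucc)) :
    r = -h • (E *ᵥ (γ • lam (Fin.last i) + ∑ j : Fin i, g j • lam j.castSucc)) := by
  have hJV : ∀ x : Fin M → ℝ, J *ᵥ (V *ᵥ x) = V *ᵥ (T *ᵥ x) + E *ᵥ x := by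
    intro x
    rw [Matrix.mulVec_mulVec, hE, Matrix.add_mulVec, ← Matrix.mulVec_mulVec]
  have hsum : V *ᵥ (∑ j : Fin i, g j • lam j.castSucc)
      = ∑ j : Fin i, g j • k j.castSucc := by
    rw [← Matrix.mulVecLin_apply, map_sum]
    simp [hk, Matrix.mulVec_smul]
  have hVlam' : V *ᵥ lam (Fin.last i)
      = h • F (Fin.last i) + h • (V *ᵥ (T *ᵥ ∑ j : Fin i, g j • lam j.castSucc))
        + (h * γ) • (V *ᵥ (T *ᵥ lam (Fin.last i))) := by
    have h2 := congrArg (fun x => V *ᵥ x) hlam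
    simp only [Matrix.sub_mulVec, Matrix.smul_mulVec, Matrix.one_mulVec,
      Matrix.mulVec_add, Matrix.mulVec_smul, Matrix.mulVec_sub, hψ, hF] at h2
    linear_combination (norm := module) h2
  rw [hr, hk, ← hsum, Matrix.sub_mulVec, Matrix.smul_mulVec, Matrix.one_mulVec,
    hJV, hJV, hVlam', Matrix.mulVec_add, Matrix.mulVec_smul]
  module
end
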